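/- arXiv:2105.12298 — 4 statements merged into one kernel-verified Lean document; each statement's English description precedes it below -/
import Mathlib

section
/- Suppose s' ≠ s* and no agent can refute s' at s* (i.e., s' is a nonrefutable lie at s*), and suppose s* and s' are not evidence-equivalent (some agent's evidence sets differ between them). Then some agent i has an article of evidence E ∈ ℰᵢ(s') with s* ∉ E; that is, some agent can refute s* at s'. -/
/-- Observation 2: if s' is a nonrefutable lie at s* (and the two states are not
evidence-equivalent), then some agent can refute s* at s'. -/
theorem stmt1 {S ι : Type*} [Fintype S] [Fintype ι]
    (ℰ : ι → S → Set (Set S))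
    (e1 : ∀ i s E, E ∈ ℰ i s → s ∈ E)
    (e2 : ∀ i s E, E ∈ ℰ i s → ∀ s' ∈ E, E ∈ ℰ i s')
    (sstar s' : S) (hne : s' ≠ sstar)
    (hnonref : ∀ i, ∀ E ∈ ℰ i sstar, s' ∈ E)
    (hnequiv : ∃ i, ℰ i sstar ≠ ℰ i s') :
    ∃ i, ∃ E ∈ ℰ i s', sstar ∉ E := by
  by_contra h
  push_neg at h
  obtain ⟨i, hi⟩ := hnequiv
  apply hi
  ext E
  constructor
  · intro hE
    exact e2 i sstar E hE s' (hnonref i E hE)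
  · intro hE
    exact e2 i s' E hE sstar (h i E hE)
end

section
/- If s' is a nonrefutable lie at s* (with s* and s' not evidence-equivalent), then it is impossible for every agent to support s' at s*: there exists an agent j such that no evidence message available to j at s* is contained in Eⱼ*(s'). -/
/-- If s' is a nonrefutable lie at s*, then it is impossible for every agent to
support s' at s*: some agent j has no evidence message available at s*
contained in the tightest evidence at s'. -/
theorem stmt7 {S ι : Type*} [Fintype S] [Fintype ι]
    (ℰ : ι → S → Set (Set S))
    (e1 : ∀ i s E, E ∈ ℰ i s → s ∈ E)
    (e2 : ∀ i s E, E ∈ ℰ i s → ∀ s'' ∈ E, E ∈ ℰ i s'')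
    (hnonempty : ∀ i s, (ℰ i s).Nonempty)
    (hnormal : ∀ i s, ⋂₀ ℰ i s ∈ ℰ i s)
    (sstar s' : S) (hne : s' ≠ sstar)
    (hnonref : ∀ i, ∀ E ∈ ℰ i sstar, s' ∈ E)
    (hnequiv : ∃ i, ℰ i sstar ≠ ℰ i s') :
    ∃ j, ∀ E ∈ ℰ j sstar, ¬ E ⊆ ⋂₀ ℰ j s' := by
  obtain ⟨i, hi⟩ := hnequiv
  refine ⟨i, fun E hE hsub => hi ?_⟩
  ext F
  constructor
  · intro hF
    exact e2 i sstar F hF s' (hnonref i F hF)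
  · intro hF
    have hsstar : sstar ∈ F := hsub (e1 i sstar E hE) F hF
    exact e2 i s' F hF sstar hsstar
end

section
/- Necessity direction of the renegotiation-proofness characterization (Condition (c) case): Suppose two states s, s' have f(s) ≠ f(s'), agent i can refute s' at s, and agent j can refute s at s'. Let state-independent utilities satisfy vᵢ(f(s')) = 1, vᵢ(f(s)) = 0, vⱼ(f(s')) = 0, vⱼ(f(s)) = 1, and vᵢ(a) + vⱼ(a) = 1 with both values < 1 for all other a. Then for any budget-balanced mechanism (τᵢ + τⱼ = 0 everywhere) and any equilibrium message pairs (mᵢˢ, mⱼˢ) at s and (mᵢˢ', mⱼˢ') at s', either agent i strictly profits by deviating to mᵢˢ' at s, or agent j strictly profits by deviating to mⱼˢ at s'. Hence no budget-balanced mechanism Nash-implements f. -/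
/-- Necessity, Condition (c) case: with the constructed state-independent
utilities and any budget-balanced mechanism, at the crossed message profile
either agent 1 strictly profits by deviating to m₁ˢ' at s, or agent 2 strictly
profits by deviating to m₂ˢ at s'. Hence no budget-balanced mechanism
Nash-implements f. -/
theorem stmt13 {S A M₁ M₂ : Type*}
    (ℰ₁ ℰ₂ : S → Set (Set S))
    (f : S → A) (s s' : S) (hf : f s ≠ f s')
    -- agent 1 can refute s' at s, agent 2 can refute s at s'
    (href₁ : ∃ E ∈ ℰ₁ s, s' ∉ E) (href₂ : ∃ E ∈ ℰ₂ s', s ∉ E)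
    (v₁ v₂ : A → ℝ)
    (hv₁s' : v₁ (f s') = 1) (hv₁s : v₁ (f s) = 0)
    (hv₂s' : v₂ (f s') = 0) (hv₂s : v₂ (f s) = 1)
    (hsum : ∀ a, v₁ a + v₂ a = 1)
    (hlt : ∀ a, a ≠ f s → a ≠ f s' → v₁ a < 1 ∧ v₂ a < 1)
    (g : M₁ → M₂ → A) (τ₁ τ₂ : M₁ → M₂ → ℝ)
    (hbb : ∀ m₁ m₂, τ₁ m₁ m₂ + τ₂ m₁ m₂ = 0)
    (m₁s : M₁) (m₂s : M₂) (m₁s' : M₁) (m₂s' : M₂)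
    (heqs : g m₁s m₂s = f s ∧ τ₁ m₁s m₂s = 0 ∧ τ₂ m₁s m₂s = 0)
    (heqs' : g m₁s' m₂s' = f s' ∧ τ₁ m₁s' m₂s' = 0 ∧ τ₂ m₁s' m₂s' = 0) :
    (v₁ (g m₁s' m₂s) + τ₁ m₁s' m₂s > v₁ (f s)) ∨
    (v₂ (g m₁s' m₂s) + τ₂ m₁s' m₂s > v₂ (f s')) := by
  by_contra h
  push_neg at h
  have h1 := hsum (g m₁s' m₂s)
  have h2 := hbb m₁s' m₂s
  obtain ⟨ha, hb⟩ := h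
  rw [hv₁s] at ha
  rw [hv₂s'] at hb
  linarith
end

section
/- In the four-state example with costs (all available articles costless except {s₄} which has positive finite cost ε, and unavailable articles cost +∞), no SCF f with f(s₁), f(s₂), f(s₃), f(s₄) pairwise distinct is evidence-monotonic under constant preferences: for every choice of cheapest-evidence selection E* with E₁*(s₄) ∈ {S, {s₂,s₄}, {s₃,s₄}} (the cheapest articles at s₄), there exists a pair of states s, s' with f(s) ≠ f(s') such that for all agents i, all t ∈ ℝ, and all articles E': cᵢ(Eᵢ*(s), s) ≤ cᵢ(E', s) − t implies cᵢ(Eᵢ*(s), s') ≤ cᵢ(E', s') − t. -/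
open Classical

/-- Agent 1's available articles of evidence in the four-state example. -/
def avail1 : Fin 4 → Set (Set (Fin 4)) := fun s =>
  if s = 0 then {Set.univ}
  else if s = 1 then {Set.univ, {1, 3}}
  else if s = 2 then {Set.univ, {2, 3}}
  else {Set.univ, {1, 3}, {2, 3}, {3}}

/-- In the four-state example with costs (available articles costless except
{s₄} which costs ε > 0, unavailable articles costing K exceeding all finite
costs), no SCF with pairwise distinct values is evidence-monotonic under
constant preferences: for every cheapest-evidence selection there is a pair of
states with distinct outcomes for which no agent can challenge. -/
theorem stmt15 {A : Type*} (ε K : ℝ) (hε : 0 < ε) (hεK : ε < K)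
    (c : Fin 2 → Set (Fin 4) → Fin 4 → ℝ)
    (hc0 : ∀ E s, c 0 E s =
      if E ∈ avail1 s then (if E = ({3} : Set (Fin 4)) then ε else 0) else K)
    (hc1 : ∀ E s, c 1 E s = if E = (Set.univ : Set (Fin 4)) then 0 else K)
    (Estar : Fin 2 → Fin 4 → Set (Fin 4))
    (hcheap : ∀ i s E, c i (Estar i s) s ≤ c i E s)
    (hE03 : Estar 0 3 ∈
      ({Set.univ, {1, 3}, {2, 3}} : Set (Set (Fin 4))))
    (f : Fin 4 → A) (hf : Function.Injective f) :
    ∃ s s' : Fin 4, f s ≠ f s' ∧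
      ∀ (i : Fin 2) (t : ℝ) (E' : Set (Fin 4)),
        c i (Estar i s) s ≤ c i E' s - t →
        c i (Estar i s) s' ≤ c i E' s' - t := by
  have hK0 : (0:ℝ) < K := hε.trans hεK
  have hnn : ∀ E s, 0 ≤ c 0 E s := by
    intro E s; rw [hc0]; split_ifs <;> linarith
  have hub : ∀ E s, c 0 E s ≤ K := by
    intro E s; rw [hc0]; split_ifs <;> linarith
  -- set inequalities
  have h13ne : ({1,3} : Set (Fin 4)) ≠ {3} := by
    intro h; have := Set.ext_iff.mp h 1; simp at this
  have h23ne : ({2,3} : Set (Fin 4)) ≠ {3} := by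
    intro h; have := Set.ext_iff.mp h 2; simp at this
  have hune : (Set.univ : Set (Fin 4)) ≠ {3} := by
    intro h; have := Set.ext_iff.mp h 0; simp at this
  -- value of cheapest evidence for agent 0 at state 3
  have hE3zero : c 0 (Estar 0 3) 3 = 0 := by
    refine le_antisymm ?_ (hnn _ _)
    have h := hcheap 0 3 Set.univ
    have hu : c 0 Set.univ 3 = 0 := by
      rw [hc0]; rw [if_pos (by simp [avail1]), if_neg hune]
    linarith
  -- key comparison lemmas
  have key1 : ∀ E', c 0 E' 3 ≤ c 0 E' 1 := by
    intro E'
    by_cases hm : E' ∈ avail1 1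
    · have : E' = Set.univ ∨ E' = {1,3} := by simpa [avail1] using hm
      have hz : c 0 E' 3 = 0 := by
        rcases this with h | h <;> subst h <;> rw [hc0]
        · rw [if_pos (by simp [avail1]), if_neg hune]
        · rw [if_pos (by simp [avail1]), if_neg h13ne]
      rw [hz]; exact hnn _ _
    · have : c 0 E' 1 = K := by rw [hc0, if_neg hm]
      rw [this]; exact hub _ _
  have key2 : ∀ E', c 0 E' 3 ≤ c 0 E' 2 := by
    intro E'
    by_cases hm : E' ∈ avail1 2
    · have : E' = Set.univ ∨ E' = {2,3} := by simpa [avail1] using hm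
      have hz : c 0 E' 3 = 0 := by
        rcases this with h | h <;> subst h <;> rw [hc0]
        · rw [if_pos (by simp [avail1]), if_neg hune]
        · rw [if_pos (by simp [avail1]), if_neg h23ne]
      rw [hz]; exact hnn _ _
    · have : c 0 E' 2 = K := by rw [hc0, if_neg hm]
      rw [this]; exact hub _ _
  -- choose s' depending on Estar 0 3
  rcases hE03 with h | h | h
  -- cases univ, {1,3} : use s' = 1 ; case {2,3} : use s' = 2
  case inl =>
    refine ⟨3, 1, hf.ne (by decide), ?_⟩
    intro i t E'
    have hi : i = 0 ∨ i = 1 := by omega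
    rcases hi with rfl | rfl
    · have hEs' : c 0 (Estar 0 3) 1 = 0 := by
        rw [h, hc0]; rw [if_pos (by simp [avail1]), if_neg hune]
      rw [hE3zero, hEs']
      intro ht; have := key1 E'; linarith
    · simp only [hc1]; exact id
  case inr.inl =>
    refine ⟨3, 1, hf.ne (by decide), ?_⟩
    intro i t E'
    have hi : i = 0 ∨ i = 1 := by omega
    rcases hi with rfl | rfl
    · have hEs' : c 0 (Estar 0 3) 1 = 0 := by
        rw [h, hc0]; rw [if_pos (by simp [avail1]), if_neg h13ne]
      rw [hE3zero, hEs']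
      intro ht; have := key1 E'; linarith
    · simp only [hc1]; exact id
  case inr.inr =>
    rw [Set.mem_singleton_iff] at h
    refine ⟨3, 2, hf.ne (by decide), ?_⟩
    intro i t E'
    have hi : i = 0 ∨ i = 1 := by omega
    rcases hi with rfl | rfl
    · have hEs' : c 0 (Estar 0 3) 2 = 0 := by
        rw [h, hc0]; rw [if_pos (by simp [avail1]), if_neg h23ne]
      rw [hE3zero, hEs']
      intro ht; have := key2 E'; linarith
    · simp only [hc1]; exact id
end
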